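/- arXiv:1002.0220 — 4 statements merged into one kernel-verified Lean document; each statement's English description precedes it below -/
import Mathlib

section
/- Let G be a locally compact topological group in which every element is contained in a compact open subgroup, and suppose every ascending chain of compact open subgroups of G stabilises. If G is the union of an ascending chain of compact subgroups, then G is compact. -/
/-! By Baire category one subgroup `K m` of the chain has nonempty interior, so it is open, and
from then on the chain consists of compact open subgroups. That tail stabilises, so its final
member contains the whole union `G`, and `G` is compact. -/

open Set

theorem Monotone.iSup_eq_of_forall_ge_eq {α : Type*} [CompleteLattice α] {f : ℕ → α}
    (hf : Monotone f) {N : ℕ} (hN : ∀ n, N ≤ n → f n = f N) : ⨆ n, f n = f N :=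
  le_antisymm (iSup_le fun n => (hf (le_max_left n N)).trans (hN _ (le_max_right n N)).le)
    (le_iSup f N)

theorem Subgroup.exists_isOpen_of_iUnion_eq_univ {G ι : Type*} [Group G] [TopologicalSpace G]
    [IsTopologicalGroup G] [BaireSpace G] [Countable ι] (K : ι → Subgroup G)
    (hK : ∀ i, IsClosed (K i : Set G)) (hU : ⋃ i, (K i : Set G) = univ) :
    ∃ i, IsOpen (K i : Set G) := by
  have : Nonempty G := ⟨1⟩
  obtain ⟨i, x, hx⟩ := nonempty_interior_of_iUnion_of_closed hK hU
  exact ⟨i, (K i).isOpen_of_mem_nhds (mem_interior_iff_mem_nhds.mp hx)⟩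

theorem compact_of_union_ascending_chain_of_compact_subgroups_general
    {G : Type*} [Group G] [TopologicalSpace G] [IsTopologicalGroup G] [T2Space G]
    [LocallyCompactSpace G]
    (h2 : ∀ U : ℕ → Subgroup G,
      (∀ n, IsCompact (U n : Set G) ∧ IsOpen (U n : Set G)) → Monotone U →
      ∃ N, ∀ n, N ≤ n → U n = U N)
    (h3 : ∃ K : ℕ → Subgroup G, Monotone K ∧ (∀ n, IsCompact (K n : Set G)) ∧
      (⋃ n, (K n : Set G)) = Set.univ) :
    CompactSpace G := by
  obtain ⟨K, hK, hKc, hKu⟩ := h3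
  obtain ⟨m, hm⟩ :=
    Subgroup.exists_isOpen_of_iUnion_eq_univ K (fun n => (hKc n).isClosed) hKu
  have hKset : Monotone fun n => (K n : Set G) := fun _ _ hab => hK hab
  have htail : Monotone fun n => (K (n + m) : Set G) := hKset.comp add_left_mono
  obtain ⟨N, hN⟩ := h2 (fun n => K (n + m))
    (fun n => ⟨hKc _, Subgroup.isOpen_mono (hK (Nat.le_add_left m n)) hm⟩)
    (hK.comp add_left_mono)
  have huniv : (K (N + m) : Set G) = univ := by
    rw [← hKu, ← hKset.iUnion_nat_add m]
    exact (htail.iSup_eq_of_forall_ge_eq fun n hn => congrArg _ (hN n hn)).symm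
  rw [← isCompact_univ_iff, ← huniv]
  exact hKc _

/-- Let `G` be a locally compact group in which every element lies in a compact
open subgroup and every ascending chain of compact open subgroups stabilises.
If `G` is a union of an ascending chain of compact subgroups, then `G` is compact. -/
theorem compact_of_union_ascending_chain_of_compact_subgroups
    {G : Type*} [Group G] [TopologicalSpace G] [IsTopologicalGroup G] [T2Space G]
    [LocallyCompactSpace G]
    (h1 : ∀ g : G, ∃ U : Subgroup G, IsCompact (U : Set G) ∧ IsOpen (U : Set G) ∧ g ∈ U)
    (h2 : ∀ U : ℕ → Subgroup G,
      (∀ n, IsCompact (U n : Set G) ∧ IsOpen (U n : Set G)) → Monotone U →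
      ∃ N, ∀ n, N ≤ n → U n = U N)
    (h3 : ∃ K : ℕ → Subgroup G, Monotone K ∧ (∀ n, IsCompact (K n : Set G)) ∧
      (⋃ n, (K n : Set G)) = Set.univ) :
    CompactSpace G :=
  compact_of_union_ascending_chain_of_compact_subgroups_general h2 h3
end

section
/- Let G be a group acting on a tree T such that every element of G fixes a vertex of T (i.e., every element is elliptic). Then G fixes a vertex of T or fixes an end of T. -/
open Pointwise

namespace TitsEllipticAux

open SimpleGraph

variable {V : Type*} {T : SimpleGraph V}

/-- distance from start to the i-th vertex of a walk is at most i -/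
lemma dist_getVert_left (hc : T.Connected) :
    ∀ {u v : V} (w : T.Walk u v) (i : ℕ), T.dist u (w.getVert i) ≤ i := by
  intro u v w
  induction w with
  | nil => intro i; simp [Walk.getVert, SimpleGraph.dist_self]
  | @cons a b c h p ih =>
    intro i
    cases i with
    | zero => simp
    | succ i =>
      rw [Walk.getVert_cons_succ]
      calc T.dist a (p.getVert i) ≤ T.dist a b + T.dist b (p.getVert i) := hc.dist_triangle
        _ ≤ 1 + i := by
            have h1 : T.dist a b ≤ 1 := by
              simpa using dist_le (Walk.cons h (Walk.nil : T.Walk b b))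
            exact Nat.add_le_add h1 (ih i)
        _ = i + 1 := by omega

lemma dist_getVert_right :
    ∀ {u v : V} (w : T.Walk u v) (i : ℕ), T.dist (w.getVert i) v ≤ w.length - i := by
  intro u v w
  induction w with
  | nil => intro i; simp [Walk.getVert]
  | @cons a b c h p ih =>
    intro i
    cases i with
    | zero =>
      simpa using dist_le (Walk.cons h p)
    | succ i =>
      rw [Walk.getVert_cons_succ]
      simpa using ih i

/-- on a geodesic walk, the i-th vertex is at distance exactly i from the start
and length - i from the end. -/
lemma getVert_spec (hc : T.Connected) {u v : V} (w : T.Walk u v)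
    (hw : w.length = T.dist u v) {i : ℕ} (hi : i ≤ w.length) :
    T.dist u (w.getVert i) = i ∧ T.dist (w.getVert i) v = w.length - i := by
  have h1 := dist_getVert_left hc w i
  have h2 := dist_getVert_right w i
  have h3 : T.dist u v ≤ T.dist u (w.getVert i) + T.dist (w.getVert i) v := hc.dist_triangle
  omega

/-- uniqueness of the point at given distance on a geodesic (trees). -/
lemma uniq (hc : T.Connected) (ha : T.IsAcyclic) {u w v v' : V}
    (h1 : T.dist u v + T.dist v w = T.dist u w)
    (h2 : T.dist u v' + T.dist v' w = T.dist u w)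
    (h3 : T.dist u v = T.dist u v') : v = v' := by
  obtain ⟨a, haa⟩ := hc.exists_walk_length_eq_dist u v
  obtain ⟨b, hbb⟩ := hc.exists_walk_length_eq_dist v w
  obtain ⟨a', haa'⟩ := hc.exists_walk_length_eq_dist u v'
  obtain ⟨b', hbb'⟩ := hc.exists_walk_length_eq_dist v' w
  have hlen : (a.append b).length = T.dist u w := by
    rw [Walk.length_append]; omega
  have hlen' : (a'.append b').length = T.dist u w := by
    rw [Walk.length_append]; omega
  have hp : (a.append b).IsPath := Walk.isPath_of_length_eq_dist _ hlen
  have hp' : (a'.append b').IsPath := Walk.isPath_of_length_eq_dist _ hlen'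
  have hq := ha.path_unique ⟨a.append b, hp⟩ ⟨a'.append b', hp'⟩
  have hq' : a.append b = a'.append b' := congrArg Subtype.val hq
  have e1 : (a.append b).getVert (T.dist u v) = v := by
    rw [Walk.getVert_append, if_neg (by omega)]
    rw [haa]
    simp
  have e2 : (a'.append b').getVert (T.dist u v) = v' := by
    rw [Walk.getVert_append, if_neg (by omega)]
    rw [h3, haa']
    simp
  rw [← e1, ← e2, hq']

/-- adjacent vertices of a tree have different distances to any point. -/
lemma adj_dist_ne (hc : T.Connected) (ha : T.IsAcyclic) {x a b : V} (h : T.Adj a b) :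
    T.dist x a ≠ T.dist x b := by
  intro he
  obtain ⟨A, hA⟩ := hc.exists_walk_length_eq_dist x a
  by_cases hb : b ∈ A.support
  · obtain ⟨i, hi, hile⟩ := Walk.mem_support_iff_exists_getVert.mp hb
    have h1 : T.dist x b ≤ i := hi ▸ dist_getVert_left hc A i
    have h2 : i ≠ A.length := by
      intro hcon
      rw [hcon, Walk.getVert_length] at hi
      exact h.ne hi
    omega
  · have hApath : A.IsPath := Walk.isPath_of_length_eq_dist _ hA
    have hpath : (A.concat h).IsPath := by
      rw [← Walk.isPath_reverse_iff, Walk.reverse_concat]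
      refine Walk.IsPath.cons hApath.reverse ?_
      simpa [Walk.support_reverse] using hb
    obtain ⟨B, hBpath, hBlen⟩ := hc.exists_path_of_dist x b
    have hq := ha.path_unique ⟨A.concat h, hpath⟩ ⟨B, hBpath⟩
    have hqq : A.concat h = B := congrArg Subtype.val hq
    have hq' : (A.concat h).length = B.length := by rw [hqq]
    rw [Walk.length_concat, hA, hBlen] at hq'
    omega

/-- two "downward" neighbours of a vertex coincide (trees). -/
lemma downward_unique (hc : T.Connected) (ha : T.IsAcyclic) {x a c b : V}
    (hab : T.Adj a b) (hcb : T.Adj c b)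
    (h1 : T.dist x a + 1 = T.dist x b) (h2 : T.dist x c + 1 = T.dist x b) : a = c := by
  obtain ⟨A, hA⟩ := hc.exists_walk_length_eq_dist x a
  obtain ⟨C, hC⟩ := hc.exists_walk_length_eq_dist x c
  have hlenA : (A.concat hab).length = T.dist x b := by rw [Walk.length_concat]; omega
  have hlenC : (C.concat hcb).length = T.dist x b := by rw [Walk.length_concat]; omega
  have hpA : (A.concat hab).IsPath := Walk.isPath_of_length_eq_dist _ hlenA
  have hpC : (C.concat hcb).IsPath := Walk.isPath_of_length_eq_dist _ hlenC
  have hq := ha.path_unique ⟨A.concat hab, hpA⟩ ⟨C.concat hcb, hpC⟩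
  have hq' : A.concat hab = C.concat hcb := congrArg Subtype.val hq
  have eA : (A.concat hab).getVert (T.dist x a) = a := by
    rw [Walk.concat_eq_append, Walk.getVert_append, if_neg (by omega), hA, Nat.sub_self,
      Walk.getVert_zero]
  have eC : (C.concat hcb).getVert (T.dist x c) = c := by
    rw [Walk.concat_eq_append, Walk.getVert_append, if_neg (by omega), hC, Nat.sub_self,
      Walk.getVert_zero]
  have hxac : T.dist x a = T.dist x c := by omega
  rw [← eA, ← eC, hq', hxac]

/-- existence of medians in trees. -/
lemma median (hc : T.Connected) (ha : T.IsAcyclic) (x y z : V) :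
    ∃ m : V, T.dist x m + T.dist m y = T.dist x y ∧
      T.dist x m + T.dist m z = T.dist x z ∧
      T.dist y m + T.dist m z = T.dist y z := by
  obtain ⟨P, hP⟩ := hc.exists_walk_length_eq_dist y z
  set L := P.length with hL
  set F : ℕ → ℕ := fun i => T.dist x (P.getVert i) with hF
  have hstep : ∀ i, i < L → (F (i + 1) = F i + 1 ∨ F i = F (i + 1) + 1) := by
    intro i hi
    have hadj := P.adj_getVert_succ hi
    have hne := adj_dist_ne hc ha (x := x) hadj
    have hd1 : T.dist (P.getVert i) (P.getVert (i + 1)) = 1 := by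
      rwa [dist_eq_one_iff_adj]
    have t1 : F (i + 1) ≤ F i + 1 := by
      have := hc.dist_triangle (u := x) (v := P.getVert i) (w := P.getVert (i + 1))
      simp only [hF]; omega
    have t2 : F i ≤ F (i + 1) + 1 := by
      have := hc.dist_triangle (u := x) (v := P.getVert (i + 1)) (w := P.getVert i)
      have hd2 : T.dist (P.getVert (i+1)) (P.getVert i) = 1 := by rw [dist_comm]; exact hd1
      simp only [hF]; omega
    simp only [hF] at hne t1 t2 ⊢
    omega
  have hperm : ∀ i, i < L → F (i + 1) = F i + 1 →
      ∀ j, i ≤ j → j < L → F (j + 1) = F j + 1 := by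
    intro i hiL hiup j hij
    induction j, hij using Nat.le_induction with
    | base => intro _; exact hiup
    | succ j hij ih =>
      intro hjL
      have hjL' : j < L := by omega
      have hprev : F (j + 1) = F j + 1 := ih hjL'
      rcases hstep (j + 1) hjL with hup | hdn
      · exact hup
      · exfalso
        have hj2 : P.getVert j = P.getVert (j + 2) := by
          refine downward_unique hc ha (x := x) (b := P.getVert (j + 1))
            (P.adj_getVert_succ hjL') ((P.adj_getVert_succ hjL).symm) ?_ ?_
          · simpa [hF] using hprev.symm
          · simpa [hF] using hdn.symm
        have s1 := (getVert_spec hc P hP (i := j) (by omega)).1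
        have s2 := (getVert_spec hc P hP (i := j + 2) (by omega)).1
        rw [hj2] at s1
        omega
  classical
  set A : Set ℕ := {i | ∀ j, i ≤ j → j < L → F (j + 1) = F j + 1} with hA
  have hLA : L ∈ A := by
    intro j hj hjL; omega
  set i0 := sInf A with hi0
  have hi0A : i0 ∈ A := Nat.sInf_mem ⟨L, hLA⟩
  have hi0L : i0 ≤ L := Nat.sInf_le hLA
  have hdesc : ∀ j, j < i0 → F j = F (j + 1) + 1 := by
    intro j hj
    have hjL : j < L := lt_of_lt_of_le hj hi0L
    rcases hstep j hjL with hup | hdn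
    · exfalso
      have : j ∈ A := fun j' hjj' hj'L => hperm j hjL hup j' hjj' hj'L
      have := Nat.sInf_le this
      omega
    · exact hdn
  have hdown : ∀ j, j ≤ i0 → F j + j = F 0 := by
    intro j
    induction j with
    | zero => intro; rfl
    | succ j ih =>
      intro hj
      have h1 := hdesc j (by omega)
      have h2 := ih (by omega)
      omega
  have hup2 : ∀ j, i0 ≤ j → j ≤ L → F j = F i0 + (j - i0) := by
    intro j hij hjL
    induction j, hij using Nat.le_induction with
    | base => omega
    | succ j hij ih =>
      have h1 := hi0A j hij (by omega)
      have h2 := ih (by omega)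
      omega
  refine ⟨P.getVert i0, ?_, ?_, ?_⟩
  · -- dist x m + dist m y = dist x y
    have hym := (getVert_spec hc P hP (i := i0) hi0L).1
    have h0 : F 0 = T.dist x y := by
      simp only [hF, Walk.getVert_zero]
    have hmy : T.dist (P.getVert i0) y = i0 := by rw [dist_comm]; exact hym
    have hd := hdown i0 le_rfl
    show F i0 + T.dist (P.getVert i0) y = T.dist x y
    omega
  · have h0 : F L = T.dist x z := by
      simp only [hF, hL, Walk.getVert_length]
    have hmz := (getVert_spec hc P hP (i := i0) hi0L).2
    have hu := hup2 L hi0L le_rfl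
    show F i0 + T.dist (P.getVert i0) z = T.dist x z
    omega
  · have hym := (getVert_spec hc P hP (i := i0) hi0L).1
    have hmz := (getVert_spec hc P hP (i := i0) hi0L).2
    have hPL : P.length = T.dist y z := hP
    have hiL : i0 ≤ P.length := hi0L
    show T.dist y (P.getVert i0) + T.dist (P.getVert i0) z = T.dist y z
    omega

/-- convexity of a set of vertices. -/
def Conv (T : SimpleGraph V) (C : Set V) : Prop :=
  ∀ ⦃x⦄, x ∈ C → ∀ ⦃y⦄, y ∈ C → ∀ ⦃v⦄, T.dist x v + T.dist v y = T.dist x y → v ∈ C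

lemma helly3 (hc : T.Connected) (ha : T.IsAcyclic) {A B C : Set V}
    (hA : Conv T A) (hB : Conv T B) (hC : Conv T C)
    {x y z : V} (hx : x ∈ A ∩ B) (hy : y ∈ B ∩ C) (hz : z ∈ A ∩ C) :
    ∃ m, m ∈ A ∧ m ∈ B ∧ m ∈ C := by
  obtain ⟨m, h1, h2, h3⟩ := median hc ha x y z
  exact ⟨m, hA hx.1 hz.1 h2, hB hx.2 hy.1 h1, hC hy.2 hz.2 (by omega)⟩

lemma helly (hc : T.Connected) (ha : T.IsAcyclic) (hne : Nonempty V) {ι : Type*}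
    [DecidableEq ι] :
    ∀ (S : Finset ι) (C : ι → Set V), (∀ i ∈ S, Conv T (C i)) →
      (∀ i ∈ S, ∀ j ∈ S, (C i ∩ C j).Nonempty) → ∃ v, ∀ i ∈ S, v ∈ C i := by
  intro S
  induction S using Finset.induction_on with
  | empty => intro C _ _; exact ⟨hne.some, by simp⟩
  | @insert a s hna ih =>
    intro C hconv hpair
    rcases s.eq_empty_or_nonempty with rfl | ⟨i1, hi1⟩
    · obtain ⟨v, hv, _⟩ := hpair a (Finset.mem_insert_self a _) a (Finset.mem_insert_self a _)
      refine ⟨v, ?_⟩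
      intro i hi
      rcases Finset.mem_insert.mp hi with rfl | hi'
      · exact hv
      · simp at hi'
    · have hconv' : ∀ i ∈ s, Conv T (C i ∩ C a) := by
        intro i hi
        intro p hp q hq v hv
        exact ⟨hconv i (Finset.mem_insert_of_mem hi) hp.1 hq.1 hv,
          hconv a (Finset.mem_insert_self a _) hp.2 hq.2 hv⟩
      have hpair' : ∀ i ∈ s, ∀ j ∈ s, ((C i ∩ C a) ∩ (C j ∩ C a)).Nonempty := by
        intro i hi j hj
        obtain ⟨p, hp⟩ := hpair i (Finset.mem_insert_of_mem hi) j (Finset.mem_insert_of_mem hj)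
        obtain ⟨q, hq⟩ := hpair j (Finset.mem_insert_of_mem hj) a (Finset.mem_insert_self a _)
        obtain ⟨r, hr⟩ := hpair i (Finset.mem_insert_of_mem hi) a (Finset.mem_insert_self a _)
        obtain ⟨m, hm1, hm2, hm3⟩ := helly3 hc ha
          (hconv i (Finset.mem_insert_of_mem hi)) (hconv j (Finset.mem_insert_of_mem hj))
          (hconv a (Finset.mem_insert_self a _)) hp hq hr
        exact ⟨m, ⟨hm1, hm3⟩, ⟨hm2, hm3⟩⟩
      obtain ⟨v, hv⟩ := ih (fun i => C i ∩ C a) hconv' hpair'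
      refine ⟨v, ?_⟩
      intro i hi
      rcases Finset.mem_insert.mp hi with rfl | hi'
      · exact (hv i1 hi1).2
      · exact (hv i hi').1

end TitsEllipticAux

open TitsEllipticAux SimpleGraph

/-- Tits: if a group acts on a tree such that every element fixes a vertex, then
the group fixes a vertex or fixes an end (there is a geodesic ray whose image
meets each of its translates in an infinite set). -/
theorem fixed_vertex_or_fixed_end_of_elliptic_action_on_tree
    {G V : Type*} [Group G] [MulAction G V] (T : SimpleGraph V) (hT : T.IsTree)
    (hadj : ∀ (g : G) (v w : V), T.Adj v w → T.Adj (g • v) (g • w))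
    (hell : ∀ g : G, ∃ v : V, g • v = v) :
    (∃ v : V, ∀ g : G, g • v = v) ∨
    (∃ f : ℕ → V, Function.Injective f ∧ (∀ n, T.Adj (f n) (f (n + 1))) ∧
      ∀ g : G, (Set.range f ∩ (g • Set.range f)).Infinite) := by
  classical
  obtain ⟨hc, ha⟩ := hT
  have hne : Nonempty V := hc.nonempty
  -- equivariance of the distance
  have hds : ∀ (g : G) (u v : V), T.dist (g • u) (g • v) = T.dist u v := by
    have key : ∀ (g : G) (u v : V), T.dist (g • u) (g • v) ≤ T.dist u v := by
      intro g u v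
      obtain ⟨p, hp⟩ := hc.exists_walk_length_eq_dist u v
      have := dist_le (p.map (⟨fun v => g • v, fun {a b} h => hadj g a b h⟩ : T →g T))
      rwa [Walk.length_map, hp] at this
    intro g u v
    refine le_antisymm (key g u v) ?_
    have := key g⁻¹ (g • u) (g • v)
    simpa [inv_smul_smul] using this
  -- fixed-point sets are convex
  have hFixConv : ∀ g : G, Conv T {v | g • v = v} := by
    intro g x hx y hy v hv
    have h2 : T.dist x (g • v) + T.dist (g • v) y = T.dist x y := by
      have e1 : T.dist x (g • v) = T.dist x v := by
        conv_lhs => rw [← hx]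
        rw [hds]
      have e2 : T.dist (g • v) y = T.dist v y := by
        conv_lhs => rw [← hy]
        rw [hds]
      omega
    exact (uniq hc ha hv h2 (by
      conv_rhs => rw [← hx]
      rw [hds])).symm
  -- midpoint lemma
  have hmid : ∀ (g : G) (x : V), ∃ m, g • m = m ∧
      T.dist x m + T.dist m (g • x) = T.dist x (g • x) ∧
      T.dist x m = T.dist m (g • x) := by
    intro g x
    obtain ⟨p, hp⟩ := hell g
    obtain ⟨m, h1, h2, h3⟩ := median hc ha x (g • x) p
    have hfix : m = g • m := by
      refine uniq (u := p) (w := g • x) hc ha ?_ ?_ ?_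
      · have c1 : T.dist p m = T.dist m p := SimpleGraph.dist_comm
        have c2 : T.dist m (g • x) = T.dist (g • x) m := SimpleGraph.dist_comm
        have c3 : T.dist p (g • x) = T.dist (g • x) p := SimpleGraph.dist_comm
        omega
      · have e1 : T.dist p (g • m) = T.dist p m := by
          conv_lhs => rw [← hp]
          rw [hds]
        have e2 : T.dist (g • m) (g • x) = T.dist m x := hds g m x
        have e3 : T.dist p (g • x) = T.dist p x := by
          conv_lhs => rw [← hp]
          rw [hds]
        rw [e1, e2, e3]
        have c1 : T.dist p m = T.dist m p := SimpleGraph.dist_comm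
        have c2 : T.dist m x = T.dist x m := SimpleGraph.dist_comm
        have c3 : T.dist p x = T.dist x p := SimpleGraph.dist_comm
        omega
      · conv_rhs => rw [← hp]
        rw [hds]
    refine ⟨m, hfix.symm, h1, ?_⟩
    have e : T.dist m (g • x) = T.dist (g • m) (g • x) := by rw [← hfix]
    rw [e, hds]
    exact SimpleGraph.dist_comm
  -- any two elements have a common fixed vertex
  have hpairfix : ∀ g h : G, ({v | g • v = v} ∩ {v | h • v = v} : Set V).Nonempty := by
    intro g h
    obtain ⟨v, hv⟩ := hell (g * h)
    have hgx : g • (h • v) = v := by rw [← mul_smul]; exact hv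
    obtain ⟨m1, hm1f, hm1a, hm1b⟩ := hmid g (h • v)
    obtain ⟨m2, hm2f, hm2a, hm2b⟩ := hmid h v
    rw [hgx] at hm1a hm1b
    have hm12 : m1 = m2 := by
      refine uniq (u := h • v) (w := v) hc ha hm1a ?_ ?_
      · have c1 : T.dist (h • v) m2 = T.dist m2 (h • v) := SimpleGraph.dist_comm
        have c2 : T.dist m2 v = T.dist v m2 := SimpleGraph.dist_comm
        have c3 : T.dist (h • v) v = T.dist v (h • v) := SimpleGraph.dist_comm
        omega
      · have c1 : T.dist (h • v) m2 = T.dist m2 (h • v) := SimpleGraph.dist_comm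
        have c2 : T.dist (h • v) v = T.dist v (h • v) := SimpleGraph.dist_comm
        omega
    exact ⟨m1, hm1f, hm12 ▸ hm2f⟩
  -- every finite set of group elements has a common fixed vertex
  have hFS : ∀ S : Finset G, ∃ v : V, ∀ g ∈ S, g • v = v := by
    intro S
    obtain ⟨v, hv⟩ := helly hc ha hne S (fun g => {v | g • v = v})
      (fun g _ => hFixConv g) (fun g _ h _ => hpairfix g h)
    exact ⟨v, hv⟩
  obtain ⟨x0⟩ := hne
  -- gates
  have hgate : ∀ S : Finset G, ∃ p : V, (∀ g ∈ S, g • p = p) ∧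
      ∀ c : V, (∀ g ∈ S, g • c = c) → T.dist x0 p + T.dist p c = T.dist x0 c := by
    intro S
    set Cs : Set V := {v | ∀ g ∈ S, g • v = v} with hCs
    have hCne : Cs.Nonempty := hFS S
    have hconvC : Conv T Cs := by
      intro x hx y hy v hv g hg
      exact hFixConv g (hx g hg) (hy g hg) hv
    have himg : ((fun c => T.dist x0 c) '' Cs).Nonempty := hCne.image _
    obtain ⟨p, hpC, hpk⟩ := Nat.sInf_mem himg
    refine ⟨p, hpC, ?_⟩
    intro c hcC
    obtain ⟨m, h1, h2, h3⟩ := median hc ha x0 p c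
    have hmC : m ∈ Cs := hconvC hpC hcC h3
    have hk : sInf ((fun c => T.dist x0 c) '' Cs) ≤ T.dist x0 m :=
      Nat.sInf_le ⟨m, hmC, rfl⟩
    have hpk' : T.dist x0 p = sInf ((fun c => T.dist x0 c) '' Cs) := hpk
    have hmp : T.dist m p = 0 := by omega
    have hmpeq : m = p := by
      rcases (dist_eq_zero_iff_eq_or_not_reachable (G := T)).mp hmp with h | h
      · exact h
      · exact absurd (hc.preconnected m p) h
    rw [← hmpeq]
    exact h2
  choose P hP1 hP2 using hgate
  set n : Finset G → ℕ := fun S => T.dist x0 (P S) with hn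
  have hmono : ∀ S S' : Finset G, S ⊆ S' → n S + T.dist (P S) (P S') = n S' :=
    fun S S' hss => hP2 S (P S') (fun g hg => hP1 S' g (hss hg))
  by_cases hbdd : ∃ N, ∀ S, n S ≤ N
  · -- bounded: global fixed vertex
    left
    obtain ⟨N, hN⟩ := hbdd
    have hbd : BddAbove (Set.range n) := ⟨N, by rintro x ⟨S, rfl⟩; exact hN S⟩
    have hrne : (Set.range n).Nonempty := ⟨n ∅, ∅, rfl⟩
    have hmem := Nat.sSup_mem hrne hbd
    obtain ⟨S0, hS0⟩ := hmem
    refine ⟨P S0, fun g => ?_⟩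
    have h1 := hmono S0 (insert g S0) (Finset.subset_insert g S0)
    have h2 : n (insert g S0) ≤ n S0 := by
      rw [hS0]
      exact le_csSup hbd ⟨insert g S0, rfl⟩
    have h3 : T.dist (P S0) (P (insert g S0)) = 0 := by omega
    have h4 : P S0 = P (insert g S0) := by
      rcases (dist_eq_zero_iff_eq_or_not_reachable (G := T)).mp h3 with h | h
      · exact h
      · exact absurd (hc.preconnected _ _) h
    rw [h4]
    exact hP1 _ g (Finset.mem_insert_self g S0)
  · -- unbounded: construct a ray
    right
    push_neg at hbdd
    choose Sel hSel using hbdd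
    have hW : ∀ S : Finset G, ∃ p : T.Walk x0 (P S), p.length = T.dist x0 (P S) :=
      fun S => hc.exists_walk_length_eq_dist _ _
    choose w hw using hW
    set f : ℕ → V := fun k => (w (Sel k)).getVert k with hf
    have hwd : ∀ (S S' : Finset G) (k : ℕ), k ≤ n S → k ≤ n S' →
        (w S).getVert k = (w S').getVert k := by
      intro S S' k hkS hkS'
      have claim : ∀ A : Finset G, A ⊆ S ∪ S' → k ≤ n A →
          T.dist x0 ((w A).getVert k) = k ∧
          T.dist ((w A).getVert k) (P (S ∪ S')) = n (S ∪ S') - k := by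
        intro A hA hkA
        have hspec := getVert_spec hc (w A) (hw A) (i := k) (by rw [hw A]; exact hkA)
        obtain ⟨hd1, hd2⟩ := hspec
        rw [hw A] at hd2
        have hm := hmono A (S ∪ S') hA
        have t1 : T.dist ((w A).getVert k) (P (S ∪ S')) ≤
            T.dist ((w A).getVert k) (P A) + T.dist (P A) (P (S ∪ S')) := hc.dist_triangle
        have t2 : T.dist x0 (P (S ∪ S')) ≤
            T.dist x0 ((w A).getVert k) + T.dist ((w A).getVert k) (P (S ∪ S')) :=
          hc.dist_triangle
        simp only [hn] at *
        omega
      have c1 := claim S Finset.subset_union_left hkS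
      have c2 := claim S' Finset.subset_union_right hkS'
      have hkun : k ≤ n (S ∪ S') := by
        have := hmono S (S ∪ S') Finset.subset_union_left
        omega
      refine uniq (u := x0) (w := P (S ∪ S')) hc ha ?_ ?_ ?_
      · rw [c1.1, c1.2]
        simp only [hn] at *
        omega
      · rw [c2.1, c2.2]
        simp only [hn] at *
        omega
      · rw [c1.1, c2.1]
    have hSel' : ∀ N, N ≤ n (Sel N) := fun N => le_of_lt (by simpa using hSel N)
    have hfd : ∀ k, T.dist x0 (f k) = k := by
      intro k
      exact (getVert_spec hc (w (Sel k)) (hw (Sel k))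
        (i := k) (by rw [hw (Sel k)]; exact hSel' k)).1
    refine ⟨f, ?_, ?_, ?_⟩
    · intro a b hab
      have h1 := hfd a
      rw [hab, hfd b] at h1
      exact h1.symm
    · intro k
      have e1 : f k = (w (Sel (k + 1))).getVert k :=
        hwd (Sel k) (Sel (k + 1)) k (hSel' k) (by have := hSel' (k + 1); omega)
      have e2 : f (k + 1) = (w (Sel (k + 1))).getVert (k + 1) := rfl
      rw [e1, e2]
      refine Walk.adj_getVert_succ _ ?_
      rw [hw (Sel (k + 1))]
      exact hSel' (k + 1)
    · intro g
      have key : ∀ m : ℕ, ∃ k, m ≤ k ∧ g • f k = f k := by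
        intro m
        set S : Finset G := insert g (Sel m) with hS
        have h1 : n (Sel m) ≤ n S := by
          have := hmono (Sel m) S (Finset.subset_insert g (Sel m))
          omega
        have hk : m ≤ n S := le_trans (hSel' m) h1
        refine ⟨n S, hk, ?_⟩
        have e : f (n S) = (w S).getVert (n S) :=
          hwd (Sel (n S)) S (n S) (hSel' (n S)) le_rfl
        have e2 : (w S).getVert (n S) = P S := by
          have : n S = (w S).length := (hw S).symm
          rw [this, Walk.getVert_length]
        rw [e, e2]
        exact hP1 S g (Finset.mem_insert_self g _)
      intro hfin
      have hinj : Function.Injective f := by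
        intro a b hab
        have h1 := hfd a
        rw [hab, hfd b] at h1
        exact h1.symm
      have hpre : (f ⁻¹' (Set.range f ∩ g • Set.range f)).Finite :=
        hfin.preimage (Set.injOn_of_injective hinj)
      obtain ⟨N, hN⟩ := hpre.bddAbove
      obtain ⟨k, hk1, hk2⟩ := key (N + 1)
      have hkmem : k ∈ f ⁻¹' (Set.range f ∩ g • Set.range f) := by
        refine ⟨⟨k, rfl⟩, ?_⟩
        rw [← hk2]
        exact Set.smul_mem_smul_set ⟨k, rfl⟩
      have := hN hkmem
      omega
end

section
/- Let Ω be a countably infinite set and N a countable normal subgroup of Sym(Ω). Then N is locally finite. -/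
open Equiv Set

namespace SymLF

open scoped Classical

variable {Ω : Type*} (g : Equiv.Perm Ω) (hs : {x | g x ≠ x}.Infinite)

/-- pick a point of the support avoiding a finite set and whose image avoids it too -/
noncomputable def pick (E : Set Ω) (hE : E.Finite) : Ω :=
  (hs.diff (hE.union (hE.preimage (g.injective.injOn)))).nonempty.some

lemma pick_spec (E : Set Ω) (hE : E.Finite) :
    pick g hs E hE ∈ {x | g x ≠ x} ∧ pick g hs E hE ∉ E ∧ g (pick g hs E hE) ∉ E := by
  have h := (hs.diff (hE.union (hE.preimage (g.injective.injOn)))).nonempty.some_mem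
  obtain ⟨h1, h2⟩ := h
  refine ⟨h1, fun hx => h2 (Or.inl hx), fun hx => h2 (Or.inr hx)⟩

/-- accumulated finite sets -/
noncomputable def F : ℕ → {E : Set Ω // E.Finite}
  | 0 => ⟨∅, Set.finite_empty⟩
  | n+1 =>
    ⟨insert (pick g hs (F n).1 (F n).2) (insert (g (pick g hs (F n).1 (F n).2)) (F n).1),
      (((F n).2.insert _).insert _)⟩

/-- the sequence of disjoint pairs -/
noncomputable def a (n : ℕ) : Ω := pick g hs (F g hs n).1 (F g hs n).2

lemma a_supp (n : ℕ) : g (a g hs n) ≠ a g hs n :=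
  (pick_spec g hs (F g hs n).1 (F g hs n).2).1

lemma a_mem_succ (n : ℕ) : a g hs n ∈ (F g hs (n+1)).1 := by
  simp [F, a]

lemma ga_mem_succ (n : ℕ) : g (a g hs n) ∈ (F g hs (n+1)).1 := by
  simp [F, a]

lemma F_mono {m n : ℕ} (h : m ≤ n) : (F g hs m).1 ⊆ (F g hs n).1 := by
  induction n with
  | zero => simp [Nat.le_zero.mp h]
  | succ n ih =>
    rcases Nat.lt_or_ge m (n+1) with h' | h'
    · exact (ih (Nat.lt_succ_iff.mp h')).trans (by intro x hx; simp [F]; tauto)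
    · have : m = n + 1 := le_antisymm h h'
      subst this; exact subset_rfl

lemma a_notMem (n : ℕ) : a g hs n ∉ (F g hs n).1 :=
  (pick_spec g hs (F g hs n).1 (F g hs n).2).2.1

lemma ga_notMem (n : ℕ) : g (a g hs n) ∉ (F g hs n).1 :=
  (pick_spec g hs (F g hs n).1 (F g hs n).2).2.2

/-- the pair map -/
noncomputable def p (nb : ℕ × Bool) : Ω := if nb.2 then g (a g hs nb.1) else a g hs nb.1

lemma p_mem_succ (n : ℕ) (b : Bool) : p g hs (n, b) ∈ (F g hs (n+1)).1 := by
  cases b <;> simp [p, a_mem_succ, ga_mem_succ]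

lemma p_notMem (n : ℕ) (b : Bool) : p g hs (n, b) ∉ (F g hs n).1 := by
  cases b <;> simp [p, a_notMem, ga_notMem]

lemma p_inj : Function.Injective (p g hs) := by
  have key : ∀ m n : ℕ, ∀ b c : Bool, m < n → p g hs (m, b) ≠ p g hs (n, c) := by
    intro m n b c hmn h
    have h1 : p g hs (m, b) ∈ (F g hs n).1 := F_mono g hs hmn (p_mem_succ g hs m b)
    rw [h] at h1
    exact p_notMem g hs n c h1
  rintro ⟨m, b⟩ ⟨n, c⟩ h
  rcases lt_trichotomy m n with hmn | hmn | hmn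
  · exact absurd h (key m n b c hmn)
  · subst hmn
    cases b <;> cases c <;> simp_all [p]
    · exact absurd h.symm (a_supp g hs m)
    · exact absurd h (a_supp g hs m)
  · exact absurd h.symm (key n m c b hmn)

lemma a_inj : Function.Injective (a g hs) := by
  intro m n h
  have := p_inj g hs (a₁ := (m, false)) (a₂ := (n, false)) (by simpa [p] using h)
  simpa using congrArg Prod.fst this

lemma ga_ne_a (m n : ℕ) : g (a g hs m) ≠ a g hs n := fun h => by
  have := p_inj g hs (a₁ := (m, true)) (a₂ := (n, false)) (by simpa [p] using h)
  simp at this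

/-- the swapping function on ℕ -/
noncomputable def sw (S : Set ℕ) (n : ℕ) : ℕ :=
  if n / 2 ∈ S then (if n % 2 = 0 then n + 1 else n - 1) else n

lemma sw_invol (S : Set ℕ) : Function.Involutive (sw S) := by
  intro n
  unfold sw
  by_cases h : n / 2 ∈ S
  · by_cases he : n % 2 = 0
    · have h1 : (n+1)/2 = n/2 := by omega
      have h2 : (n+1) % 2 ≠ 0 := by omega
      simp [h, he, h1, h2]
    · have h1 : (n-1)/2 = n/2 := by omega
      have h2 : (n-1) % 2 = 0 := by omega
      simp only [he, if_neg, ite_false, h1, h, if_pos, ite_true, h2, if_true]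
      omega
  · simp [h]

/-- sw as a permutation of ℕ -/
noncomputable def swPerm (S : Set ℕ) : Equiv.Perm ℕ := (sw_invol S).toPerm

lemma swPerm_apply (S : Set ℕ) (n : ℕ) : swPerm S n = sw S n := rfl

lemma sw_even_mem (S : Set ℕ) {i : ℕ} (h : i ∈ S) : sw S (2*i) = 2*i+1 := by
  simp [sw, Nat.mul_div_cancel_left, h, Nat.mul_mod_right]

lemma sw_odd_mem (S : Set ℕ) {i : ℕ} (h : i ∈ S) : sw S (2*i+1) = 2*i := by
  have h2 : (2*i+1) / 2 = i := by omega
  have h3 : (2*i+1) % 2 = 1 := by omega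
  simp [sw, h2, h3, h]

lemma sw_odd_notMem (S : Set ℕ) {i : ℕ} (h : i ∉ S) : sw S (2*i+1) = 2*i+1 := by
  have h2 : (2*i+1) / 2 = i := by omega
  simp [sw, h2, h]

/-- the conjugator -/
noncomputable def hperm (S : Set ℕ) : Equiv.Perm Ω :=
  (swPerm S).viaEmbedding ⟨a g hs, a_inj g hs⟩

lemma hperm_a (S : Set ℕ) (n : ℕ) : hperm g hs S (a g hs n) = a g hs (sw S n) :=
  Equiv.Perm.viaEmbedding_apply _ _ n

lemma hperm_not_range (S : Set ℕ) (x : Ω) (hx : ∀ n, x ≠ a g hs n) : hperm g hs S x = x := by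
  refine Equiv.Perm.viaEmbedding_apply_of_notMem _ _ x ?_
  rintro ⟨n, rfl⟩
  exact hx n rfl

lemma hperm_inv_a (S : Set ℕ) (n : ℕ) : (hperm g hs S)⁻¹ (a g hs n) = a g hs (sw S n) := by
  rw [Equiv.Perm.inv_eq_iff_eq, hperm_a, sw_invol S n]

/-- the conjugate -/
noncomputable def c (S : Set ℕ) : Equiv.Perm Ω := hperm g hs S * g * (hperm g hs S)⁻¹

lemma c_apply_odd (S : Set ℕ) (i : ℕ) :
    c g hs S (a g hs (2*i+1)) = if i ∈ S then g (a g hs (2*i)) else g (a g hs (2*i+1)) := by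
  by_cases h : i ∈ S
  · simp only [c, Equiv.Perm.mul_apply, hperm_inv_a, sw_odd_mem S h, h, if_pos]
    exact hperm_not_range g hs S _ (fun n => ga_ne_a g hs (2*i) n)
  · simp only [c, Equiv.Perm.mul_apply, hperm_inv_a, sw_odd_notMem S h, h, if_neg, ite_false]
    exact hperm_not_range g hs S _ (fun n => ga_ne_a g hs (2*i+1) n)

lemma c_le {S T : Set ℕ} (h : c g hs S = c g hs T) : S ⊆ T := by
  intro i hiS
  by_contra hiT
  have h1 := c_apply_odd g hs S i
  have h2 := c_apply_odd g hs T i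
  rw [h] at h1
  rw [h1, if_pos hiS, if_neg hiT] at h2
  have := a_inj g hs (g.injective h2)
  omega

lemma c_inj : Function.Injective (c g hs) := fun _ _ h =>
  Set.Subset.antisymm (c_le g hs h) (c_le g hs h.symm)

end SymLF

open SymLF in
lemma supp_finite {Ω : Type*} (N : Subgroup (Equiv.Perm Ω)) (hN : N.Normal)
    (hc : Countable N) {g : Equiv.Perm Ω} (hg : g ∈ N) : {x | g x ≠ x}.Finite := by
  by_contra hfin
  have hs : {x | g x ≠ x}.Infinite := hfin
  have hinj : Function.Injective (fun S : Set ℕ => (⟨c g hs S, hN.conj_mem g hg _⟩ : N)) := by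
    intro S T h
    exact c_inj g hs (Subtype.ext_iff.mp h)
  have : Countable (Set ℕ) := Countable.of_equiv _ (Equiv.ofInjective _ hinj).symm
  obtain ⟨f, hf⟩ := exists_injective_nat (Set ℕ)
  exact Function.cantor_injective f hf

/-- A countable normal subgroup of the symmetric group of a countably infinite set
is locally finite: every finitely generated subgroup of it is finite. -/
theorem countable_normal_subgroup_of_sym_locallyFinite
    {Ω : Type*} [Infinite Ω] [Countable Ω]
    (N : Subgroup (Equiv.Perm Ω)) (hN : N.Normal) (hc : Countable N) :
    ∀ s : Finset N, Finite (Subgroup.closure (s : Set N)) := by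
  intro s
  -- the union of supports of elements of s
  set T : Set Ω := ⋃ g ∈ s, {x | ((g : N) : Equiv.Perm Ω) x ≠ x} with hT
  have hTfin : T.Finite := Set.Finite.biUnion s.finite_toSet
    (fun g _ => supp_finite N hN hc g.2)
  -- the subgroup of perms supported in T
  set K : Subgroup (Equiv.Perm Ω) :=
    { carrier := {σ | ∀ x ∉ T, σ x = x}
      one_mem' := fun x _ => rfl
      mul_mem' := fun {σ τ} hσ hτ x hx => by
        simp only [Equiv.Perm.mul_apply]; rw [hτ x hx, hσ x hx]
      inv_mem' := fun {σ} hσ x hx => by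
        rw [Equiv.Perm.inv_eq_iff_eq]
        exact (hσ x hx).symm } with hK
  -- K is finite
  have hKfin : Finite K := by
    have : Finite T := hTfin
    have hmaps : ∀ σ : K, ∀ x : T, (σ : Equiv.Perm Ω) x.1 ∈ T := by
      rintro ⟨σ, hσ⟩ ⟨x, hx⟩
      by_contra hout
      have h1 : σ (σ x) = σ x := hσ _ hout
      have h2 : σ x = x := σ.injective h1
      rw [h2] at hout
      exact hout hx
    have hinj : Function.Injective (fun σ : K => fun x : T => (⟨(σ : Equiv.Perm Ω) x.1, hmaps σ x⟩ : T)) := by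
      intro σ τ h
      ext x
      by_cases hx : x ∈ T
      · exact Subtype.ext_iff.mp (congrFun h ⟨x, hx⟩)
      · rw [σ.2 x hx, τ.2 x hx]
    exact Finite.of_injective _ hinj
  -- closure maps into K
  have hle : Subgroup.closure (s : Set N) ≤ K.comap N.subtype := by
    rw [Subgroup.closure_le]
    intro g hg x hx
    simp only [hT, Set.mem_iUnion, Set.mem_setOf_eq, not_exists] at hx
    by_contra hgx
    exact hx g hg hgx
  have hinj2 : Function.Injective
      (fun g : Subgroup.closure (s : Set N) => (⟨(g : N).1, hle g.2⟩ : K)) := by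
    intro σ τ h
    have h' := congrArg (fun k : K => (k : Equiv.Perm Ω)) h
    exact Subtype.ext (Subtype.ext h')
  exact Finite.of_injective _ hinj2
end

section
/- Let G be a topological group containing a topologically simple open subgroup S with trivial quasi-centre, such that QZ(G) = 1. Then every non-trivial closed normal subgroup N of G contains S. Consequently, the intersection M of all non-trivial closed normal subgroups of G contains S and is open in G. -/
/-!
A closed normal subgroup `N` of `G` meets `S` in a closed normal subgroup of `S`, so by
topological simplicity either `S ≤ N` or `N ∩ S = 1`. In the latter case every `n ∈ N`
commutes with the open neighbourhood `{g | ⁅g, n⁆ ∈ S}` of `1`, since `⁅g, n⁆ ∈ N ∩ S`;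
thus `N` lies in the quasi-centre of `G`, which is trivial.
-/

open Subgroup
open scoped commutatorElement

theorem Subgroup.Normal.isOpen_centralizer_of_disjoint_isOpen
    {G : Type*} [Group G] [TopologicalSpace G] [IsTopologicalGroup G]
    {N S : Subgroup G} (hN : N.Normal) (hS : IsOpen (S : Set G)) (hNS : Disjoint N S)
    {n : G} (hn : n ∈ N) : IsOpen (centralizer {n} : Set G) := by
  have hcomm : Continuous fun g : G => ⁅g, n⁆ := by
    simp only [commutatorElement_def]
    fun_prop
  refine isOpen_of_mem_nhds (g := 1) _ <|
    Filter.mem_of_superset ((hS.preimage hcomm).mem_nhds (by simp)) fun g hg => ?_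
  have hgn : ⁅g, n⁆ = 1 :=
    disjoint_def.mp hNS (commutator_le_right ⊤ N (commutator_mem_commutator (mem_top g) hn)) hg
  exact mem_centralizer_singleton_iff.mpr (commutatorElement_eq_one_iff_commute.mp hgn).eq

theorem Subgroup.Normal.eq_bot_of_disjoint_isOpen
    {G : Type*} [Group G] [TopologicalSpace G] [IsTopologicalGroup G]
    (hQZ : ∀ g : G, IsOpen ((centralizer {g} : Subgroup G) : Set G) → g = 1)
    {N S : Subgroup G} (hN : N.Normal) (hS : IsOpen (S : Set G)) (hNS : Disjoint N S) :
    N = ⊥ :=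
  (eq_bot_iff_forall N).mpr fun _ hn =>
    hQZ _ (hN.isOpen_centralizer_of_disjoint_isOpen hS hNS hn)

theorem monolith_contains_simple_open_subgroup_general
    {G : Type*} [Group G] [TopologicalSpace G] [IsTopologicalGroup G]
    (S : Subgroup G) (hSopen : IsOpen (S : Set G))
    (hSsimple : ∀ N : Subgroup S, N.Normal → IsClosed (N : Set S) → N = ⊥ ∨ N = ⊤)
    (hQZG : ∀ g : G, IsOpen ((Subgroup.centralizer {g} : Subgroup G) : Set G) → g = 1) :
    (∀ N : Subgroup G, N.Normal → IsClosed (N : Set G) → N ≠ ⊥ → S ≤ N) ∧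
    S ≤ sInf {N : Subgroup G | N.Normal ∧ IsClosed (N : Set G) ∧ N ≠ ⊥} ∧
    IsOpen ((sInf {N : Subgroup G | N.Normal ∧ IsClosed (N : Set G) ∧ N ≠ ⊥} :
      Subgroup G) : Set G) := by
  have hle : ∀ N : Subgroup G, N.Normal → IsClosed (N : Set G) → N ≠ ⊥ → S ≤ N := by
    intro N hN hNclosed hNne
    have hNS_closed : IsClosed (N.subgroupOf S : Set S) :=
      hNclosed.preimage continuous_subtype_val
    refine subgroupOf_eq_top.mp ((hSsimple _ inferInstance hNS_closed).resolve_left fun hbot => ?_)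
    exact hNne (hN.eq_bot_of_disjoint_isOpen hQZG hSopen (subgroupOf_eq_bot.mp hbot))
  have hSM : S ≤ sInf {N : Subgroup G | N.Normal ∧ IsClosed (N : Set G) ∧ N ≠ ⊥} :=
    le_sInf fun N hN => hle N hN.1 hN.2.1 hN.2.2
  exact ⟨hle, hSM, isOpen_mono hSM hSopen⟩

/-- If `G` has trivial quasi-centre and contains a non-trivial topologically simple
open subgroup `S` with trivial quasi-centre, then every non-trivial closed normal
subgroup of `G` contains `S`; consequently the intersection `M` of all non-trivial
closed normal subgroups of `G` contains `S` and is open. -/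
theorem monolith_contains_simple_open_subgroup
    {G : Type*} [Group G] [TopologicalSpace G] [IsTopologicalGroup G]
    (S : Subgroup G) (hSopen : IsOpen (S : Set G)) (hSnontriv : S ≠ ⊥)
    (hSsimple : ∀ N : Subgroup S, N.Normal → IsClosed (N : Set S) → N = ⊥ ∨ N = ⊤)
    (hQZS : ∀ u : S, IsOpen ((Subgroup.centralizer {u} : Subgroup S) : Set S) → u = 1)
    (hQZG : ∀ g : G, IsOpen ((Subgroup.centralizer {g} : Subgroup G) : Set G) → g = 1) :
    (∀ N : Subgroup G, N.Normal → IsClosed (N : Set G) → N ≠ ⊥ → S ≤ N) ∧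
    S ≤ sInf {N : Subgroup G | N.Normal ∧ IsClosed (N : Set G) ∧ N ≠ ⊥} ∧
    IsOpen ((sInf {N : Subgroup G | N.Normal ∧ IsClosed (N : Set G) ∧ N ≠ ⊥} :
      Subgroup G) : Set G) :=
  monolith_contains_simple_open_subgroup_general S hSopen hSsimple hQZG
end
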